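/- arXiv:1904.12352 — 2 statements merged into one kernel-verified Lean document; each statement's English description precedes it below -/
import Mathlib

section
/- Let X and Y be random variables taking values in a finite subset of ℝ, with the same marginal distribution η. Then there is a constant C depending only on η such that |Cov(X, Y)| ≤ C · (I(X;Y))^{1/2}, where I(X;Y) is the mutual information of X and Y. -/
open Finset MeasureTheory

/-! Let `p` be the joint law of `(X, Y)` and `q = η ⊗ η` the product of its marginals. Then
`Cov(X, Y) = ∑ s t (p - q)`, which is at most `M² ‖p - q‖₁` with `M = ∑ s ∈ S, |s|`, and
`I(X; Y)` is the relative entropy `D(p ‖ q)`. Pinsker's inequality, in the Hellinger form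
`‖p - q‖₁ ≤ 2 ‖√p - √q‖₂ ≤ 2 √D(p ‖ q)`, gives the claim with `C = 2 M²`; the second step
is `(√p - √q)² ≤ p log (p / q) - p + q` termwise. -/

theorem Real.sq_sqrt_sub_sqrt_le {p q : ℝ} (hp : 0 ≤ p) (hq : 0 ≤ q) (hpq : q = 0 → p = 0) :
    (√p - √q) ^ 2 ≤ p * Real.log p - p * Real.log q - p + q := by
  rcases hp.eq_or_lt with rfl | hp
  · simp [Real.sq_sqrt hq]
  have hq : 0 < q := hq.lt_of_ne fun h => hp.ne' (hpq h.symm)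
  have hsp := Real.sqrt_pos.2 hp
  have hsq := Real.sqrt_pos.2 hq
  -- `log x ≤ x - 1` at `x = √q / √p`; times `p` this reads `p log q - p log p ≤ 2 (√p √q - p)`
  have hlog : Real.log q - Real.log p ≤ 2 * (√q / √p - 1) := by
    have := Real.log_le_sub_one_of_pos (div_pos hsq hsp)
    rw [Real.log_div hsq.ne' hsp.ne', Real.log_sqrt hq.le, Real.log_sqrt hp.le] at this
    linarith
  have hcross : p * (√q / √p) = √p * √q := by
    field_simp
    rw [Real.sq_sqrt hp.le]
  nlinarith [Real.sq_sqrt hp.le, Real.sq_sqrt hq.le, mul_le_mul_of_nonneg_left hlog hp.le]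

namespace Finset

variable {ι : Type*} (T : Finset ι) {p q : ι → ℝ}

theorem sum_abs_sub_le_two_mul_sqrt_sum_sq_sqrt_sub_sqrt (hp : ∀ i ∈ T, 0 ≤ p i)
    (hq : ∀ i ∈ T, 0 ≤ q i) (hp1 : ∑ i ∈ T, p i = 1) (hq1 : ∑ i ∈ T, q i = 1) :
    ∑ i ∈ T, |p i - q i| ≤ 2 * √(∑ i ∈ T, (√(p i) - √(q i)) ^ 2) := by
  have hfactor : ∀ i ∈ T, |p i - q i| = |√(p i) - √(q i)| * (√(p i) + √(q i)) := fun i hi => by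
    rw [← abs_of_nonneg (by positivity : 0 ≤ √(p i) + √(q i)), ← abs_mul]
    congr 1
    linear_combination -Real.sq_sqrt (hp i hi) + Real.sq_sqrt (hq i hi)
  have hsum_sq : ∑ i ∈ T, (√(p i) + √(q i)) ^ 2 ≤ 4 := by
    calc ∑ i ∈ T, (√(p i) + √(q i)) ^ 2 ≤ ∑ i ∈ T, 2 * (p i + q i) := by
          refine sum_le_sum fun i hi => ?_
          nlinarith [sq_nonneg (√(p i) - √(q i)), Real.sq_sqrt (hp i hi), Real.sq_sqrt (hq i hi)]
      _ = 4 := by rw [← mul_sum, sum_add_distrib, hp1, hq1]; norm_num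
  calc ∑ i ∈ T, |p i - q i| = ∑ i ∈ T, |√(p i) - √(q i)| * (√(p i) + √(q i)) :=
        sum_congr rfl hfactor
    _ ≤ √(∑ i ∈ T, |√(p i) - √(q i)| ^ 2) * √(∑ i ∈ T, (√(p i) + √(q i)) ^ 2) :=
        Real.sum_mul_le_sqrt_mul_sqrt _ _ _
    _ ≤ √(∑ i ∈ T, (√(p i) - √(q i)) ^ 2) * 2 := by
        simp only [sq_abs]
        gcongr
        rw [Real.sqrt_le_left (by norm_num)]
        linarith
    _ = _ := mul_comm _ _

theorem sum_sq_sqrt_sub_sqrt_le_sum_mul_log_sub (hp : ∀ i ∈ T, 0 ≤ p i) (hq : ∀ i ∈ T, 0 ≤ q i)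
    (hpq : ∀ i ∈ T, q i = 0 → p i = 0) (hsum : ∑ i ∈ T, p i = ∑ i ∈ T, q i) :
    ∑ i ∈ T, (√(p i) - √(q i)) ^ 2 ≤ ∑ i ∈ T, (p i * Real.log (p i) - p i * Real.log (q i)) := by
  calc ∑ i ∈ T, (√(p i) - √(q i)) ^ 2
      ≤ ∑ i ∈ T, (p i * Real.log (p i) - p i * Real.log (q i) - p i + q i) :=
        sum_le_sum fun i hi => Real.sq_sqrt_sub_sqrt_le (hp i hi) (hq i hi) (hpq i hi)
    _ = _ := by simp only [sum_add_distrib, sum_sub_distrib, hsum]; ring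

theorem sum_abs_sub_le_two_mul_sqrt_sum_mul_log_sub (hp : ∀ i ∈ T, 0 ≤ p i)
    (hq : ∀ i ∈ T, 0 ≤ q i) (hpq : ∀ i ∈ T, q i = 0 → p i = 0) (hp1 : ∑ i ∈ T, p i = 1)
    (hq1 : ∑ i ∈ T, q i = 1) :
    ∑ i ∈ T, |p i - q i| ≤ 2 * √(∑ i ∈ T, (p i * Real.log (p i) - p i * Real.log (q i))) := by
  calc _ ≤ 2 * √(∑ i ∈ T, (√(p i) - √(q i)) ^ 2) :=
        sum_abs_sub_le_two_mul_sqrt_sum_sq_sqrt_sub_sqrt T hp hq hp1 hq1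
    _ ≤ _ := by
        gcongr 2 * √?_
        exact sum_sq_sqrt_sub_sqrt_le_sum_mul_log_sub T hp hq hpq (hp1.trans hq1.symm)

end Finset

section JointDistribution

variable {α : Type*} {S : Finset α} {η : α → ℝ} {p : α → α → ℝ}

theorem le_of_sum_eq_of_nonneg {f : α → ℝ} {a : ℝ} (hf : ∀ s, 0 ≤ f s) (h : ∑ s ∈ S, f s = a)
    {s : α} (hs : s ∈ S) : f s ≤ a :=
  h ▸ single_le_sum (fun s _ => hf s) hs

theorem sum_sum_mul_log_mul_eq (hp : ∀ s t, 0 ≤ p s t) (hrow : ∀ s ∈ S, ∑ t ∈ S, p s t = η s)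
    (hcol : ∀ t ∈ S, ∑ s ∈ S, p s t = η t) :
    ∑ s ∈ S, ∑ t ∈ S, p s t * Real.log (η s * η t) =
      ∑ s ∈ S, η s * Real.log (η s) + ∑ t ∈ S, η t * Real.log (η t) := by
  have hsplit : ∀ s ∈ S, ∀ t ∈ S,
      p s t * Real.log (η s * η t) = p s t * Real.log (η s) + p s t * Real.log (η t) := by
    intro s hs t ht
    rcases (hp s t).eq_or_lt with h | h
    · simp [← h]
    · rw [Real.log_mul (h.trans_le (le_of_sum_eq_of_nonneg (hp s) (hrow s hs) ht)).ne'
        (h.trans_le (le_of_sum_eq_of_nonneg (hp · t) (hcol t ht) hs)).ne', mul_add]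
  rw [sum_congr rfl fun s hs => sum_congr rfl (hsplit s hs)]
  simp only [sum_add_distrib]
  rw [sum_comm (f := fun s t => p s t * Real.log (η t))]
  simp only [← sum_mul]
  exact congr_arg₂ _ (sum_congr rfl fun s hs => by rw [hrow s hs])
    (sum_congr rfl fun t ht => by rw [hcol t ht])

theorem entropy_add_entropy_sub_entropy_eq (hp : ∀ s t, 0 ≤ p s t)
    (hrow : ∀ s ∈ S, ∑ t ∈ S, p s t = η s) (hcol : ∀ t ∈ S, ∑ s ∈ S, p s t = η t) :
    -(∑ s ∈ S, η s * Real.log (η s)) + -(∑ s ∈ S, η s * Real.log (η s))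
        - -(∑ s ∈ S, ∑ t ∈ S, p s t * Real.log (p s t)) =
      ∑ x ∈ S ×ˢ S, (p x.1 x.2 * Real.log (p x.1 x.2) - p x.1 x.2 * Real.log (η x.1 * η x.2)) := by
  simp only [sum_product, sum_sub_distrib]
  rw [sum_sum_mul_log_mul_eq hp hrow hcol]
  ring

theorem sum_abs_sub_mul_le_two_mul_sqrt_mutualInfo (hp : ∀ s t, 0 ≤ p s t)
    (hp1 : ∑ s ∈ S, ∑ t ∈ S, p s t = 1) (hrow : ∀ s ∈ S, ∑ t ∈ S, p s t = η s)
    (hcol : ∀ t ∈ S, ∑ s ∈ S, p s t = η t) :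
    ∑ x ∈ S ×ˢ S, |p x.1 x.2 - η x.1 * η x.2| ≤
      2 * √(-(∑ s ∈ S, η s * Real.log (η s)) + -(∑ s ∈ S, η s * Real.log (η s))
        - -(∑ s ∈ S, ∑ t ∈ S, p s t * Real.log (p s t))) := by
  have hη0 : ∀ s ∈ S, 0 ≤ η s := fun s hs => hrow s hs ▸ sum_nonneg fun t _ => hp s t
  have hη1 : ∑ s ∈ S, η s = 1 := by rw [← sum_congr rfl hrow, hp1]
  rw [entropy_add_entropy_sub_entropy_eq hp hrow hcol]
  refine sum_abs_sub_le_two_mul_sqrt_sum_mul_log_sub _ (fun x _ => hp _ _)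
    (fun x hx => mul_nonneg (hη0 _ (mem_product.1 hx).1) (hη0 _ (mem_product.1 hx).2))
    (fun x hx h => ?_) (by rwa [sum_product]) (by rw [sum_product, ← sum_mul_sum, hη1, one_mul])
  obtain ⟨hs, ht⟩ := mem_product.1 hx
  refine le_antisymm ?_ (hp _ _)
  rcases mul_eq_zero.1 h with h | h
  · exact h ▸ le_of_sum_eq_of_nonneg (hp x.1) (hrow _ hs) ht
  · exact h ▸ le_of_sum_eq_of_nonneg (hp · x.2) (hcol _ ht) hs

theorem abs_sum_sum_mul_sub_le {S : Finset ℝ} {η : ℝ → ℝ} {p : ℝ → ℝ → ℝ} {M : ℝ}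
    (hM : ∀ s ∈ S, |s| ≤ M) (hrow : ∀ s ∈ S, ∑ t ∈ S, p s t = η s)
    (hcol : ∀ t ∈ S, ∑ s ∈ S, p s t = η t) :
    |∑ s ∈ S, ∑ t ∈ S, s * t * p s t -
        (∑ s ∈ S, ∑ t ∈ S, s * p s t) * ∑ s ∈ S, ∑ t ∈ S, t * p s t| ≤
      M ^ 2 * ∑ x ∈ S ×ˢ S, |p x.1 x.2 - η x.1 * η x.2| := by
  have hmeanX : ∑ s ∈ S, ∑ t ∈ S, s * p s t = ∑ s ∈ S, s * η s :=
    sum_congr rfl fun s hs => by rw [← mul_sum, hrow s hs]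
  have hmeanY : ∑ s ∈ S, ∑ t ∈ S, t * p s t = ∑ t ∈ S, t * η t := by
    rw [sum_comm]
    exact sum_congr rfl fun t ht => by rw [← mul_sum, hcol t ht]
  have hcov : ∑ s ∈ S, ∑ t ∈ S, s * t * p s t - (∑ s ∈ S, s * η s) * ∑ t ∈ S, t * η t =
      ∑ x ∈ S ×ˢ S, x.1 * x.2 * (p x.1 x.2 - η x.1 * η x.2) := by
    rw [sum_mul_sum, sum_product, ← sum_sub_distrib]
    exact sum_congr rfl fun s _ => by rw [← sum_sub_distrib]; exact sum_congr rfl fun t _ => by ring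
  rw [hmeanX, hmeanY, hcov, mul_sum]
  refine (abs_sum_le_sum_abs _ _).trans (sum_le_sum fun x hx => ?_)
  obtain ⟨hs, ht⟩ := mem_product.1 hx
  rw [abs_mul, abs_mul, sq]
  gcongr
  · exact (abs_nonneg _).trans (hM _ hs)
  · exact hM _ hs
  · exact hM _ ht

end JointDistribution

section FiniteRange

variable {Ω ι : Type*} [MeasurableSpace Ω] {μ : Measure Ω} [IsFiniteMeasure μ] {T : Finset ι}
  {W : Ω → ι}

theorem integral_comp_eq_sum_measureReal (hW : ∀ i ∈ T, MeasurableSet (W ⁻¹' {i}))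
    (hWT : ∀ ω, W ω ∈ T) (f : ι → ℝ) :
    ∫ ω, f (W ω) ∂μ = ∑ i ∈ T, f i * μ.real (W ⁻¹' {i}) := by
  have hind : (fun ω => f (W ω)) = fun ω => ∑ i ∈ T, (W ⁻¹' {i}).indicator (fun _ => f i) ω := by
    funext ω
    rw [sum_eq_single_of_mem (W ω) (hWT ω), Set.indicator_of_mem (s := W ⁻¹' {W ω}) rfl]
    exact fun i _ hi => Set.indicator_of_notMem (fun h => hi h.symm) _
  rw [hind, integral_finsetSum T fun i hi => (integrable_const (f i)).indicator (hW i hi)]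
  exact sum_congr rfl fun i hi => by rw [integral_indicator_const _ (hW i hi), smul_eq_mul, mul_comm]

theorem sum_measureReal_inter_preimage_singleton (A : Set Ω)
    (hW : ∀ i ∈ T, MeasurableSet (W ⁻¹' {i})) (hWT : ∀ ω, W ω ∈ T) :
    ∑ i ∈ T, μ.real (A ∩ W ⁻¹' {i}) = μ.real A := by
  have hfull : W ⁻¹' T = Set.univ := Set.eq_univ_of_forall hWT
  rw [← measureReal_restrict_apply_univ, ← hfull, ← sum_measureReal_preimage_singleton T hW]
  exact sum_congr rfl fun i hi => by rw [measureReal_restrict_apply (hW i hi), Set.inter_comm]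

end FiniteRange

theorem cov_le_sqrt_mutual_information_general (S : Finset ℝ) (η : ℝ → ℝ) :
    ∃ C : ℝ, ∀ (Ω : Type) (_ : MeasurableSpace Ω) (μ : Measure Ω)
      (_ : IsProbabilityMeasure μ) (X Y : Ω → ℝ),
      Measurable X → Measurable Y →
      (∀ ω, X ω ∈ S) → (∀ ω, Y ω ∈ S) →
      (∀ s ∈ S, (μ {ω | X ω = s}).toReal = η s) →
      (∀ s ∈ S, (μ {ω | Y ω = s}).toReal = η s) →
      |(∫ ω, X ω * Y ω ∂μ) - (∫ ω, X ω ∂μ) * (∫ ω, Y ω ∂μ)| ≤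
        C * Real.sqrt
          (-(∑ s ∈ S, η s * Real.log (η s)) + -(∑ s ∈ S, η s * Real.log (η s))
            - -(∑ s ∈ S, ∑ t ∈ S,
                  (μ {ω | X ω = s ∧ Y ω = t}).toReal *
                    Real.log ((μ {ω | X ω = s ∧ Y ω = t}).toReal))) := by
  refine ⟨2 * (∑ s ∈ S, |s|) ^ 2, fun Ω _ μ _ X Y hX hY hXS hYS hμX hμY => ?_⟩
  set p : ℝ → ℝ → ℝ := fun s t => μ.real {ω | X ω = s ∧ Y ω = t}
  have hXfib : ∀ s ∈ S, MeasurableSet (X ⁻¹' {s}) := fun s _ => hX (measurableSet_singleton s)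
  have hYfib : ∀ t ∈ S, MeasurableSet (Y ⁻¹' {t}) := fun t _ => hY (measurableSet_singleton t)
  have hrow : ∀ s ∈ S, ∑ t ∈ S, p s t = η s := fun s hs =>
    (sum_measureReal_inter_preimage_singleton (X ⁻¹' {s}) hYfib hYS).trans (hμX s hs)
  have hcol : ∀ t ∈ S, ∑ s ∈ S, p s t = η t := fun t ht => by
    simp only [p, Set.ofPred_and, Set.inter_comm {ω | X ω = _}]
    exact (sum_measureReal_inter_preimage_singleton (Y ⁻¹' {t}) hXfib hXS).trans (hμY t ht)
  have hE : ∀ f : ℝ → ℝ → ℝ, ∫ ω, f (X ω) (Y ω) ∂μ = ∑ s ∈ S, ∑ t ∈ S, f s t * p s t := fun f => by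
    have hfib : ∀ s t, (fun ω => (X ω, Y ω)) ⁻¹' {(s, t)} = {ω | X ω = s ∧ Y ω = t} :=
      fun s t => by ext; simp
    rw [integral_comp_eq_sum_measureReal (T := S ×ˢ S) (W := fun ω => (X ω, Y ω))
      (fun x _ => hX.prodMk hY (measurableSet_singleton x))
      (fun ω => mem_product.2 ⟨hXS ω, hYS ω⟩) (fun x => f x.1 x.2), sum_product]
    simp only [hfib, p]
  have hp1 : ∑ s ∈ S, ∑ t ∈ S, p s t = 1 := by simpa using (hE fun _ _ => 1).symm
  rw [hE fun s t => s * t, hE fun s _ => s, hE fun _ t => t, mul_comm 2, mul_assoc]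
  calc _ ≤ (∑ s ∈ S, |s|) ^ 2 * ∑ x ∈ S ×ˢ S, |p x.1 x.2 - η x.1 * η x.2| :=
        abs_sum_sum_mul_sub_le (fun s hs => single_le_sum (fun s _ => abs_nonneg s) hs) hrow hcol
    _ ≤ _ := by
        gcongr
        exact sum_abs_sub_mul_le_two_mul_sqrt_mutualInfo (fun _ _ => measureReal_nonneg) hp1 hrow hcol

/-- for random variables `X, Y` with values in a finite subset `S ⊆ ℝ`
and common marginal distribution `η`, there is `C` depending only on `η` (and `S`)
with `|Cov(X,Y)| ≤ C · I(X;Y)^{1/2}`. -/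
theorem cov_le_sqrt_mutual_information (S : Finset ℝ) (η : ℝ → ℝ)
    (hη0 : ∀ s, 0 ≤ η s) (hη1 : ∑ s ∈ S, η s = 1) :
    ∃ C : ℝ, ∀ (Ω : Type) (_ : MeasurableSpace Ω) (μ : Measure Ω)
      (_ : IsProbabilityMeasure μ) (X Y : Ω → ℝ),
      Measurable X → Measurable Y →
      (∀ ω, X ω ∈ S) → (∀ ω, Y ω ∈ S) →
      (∀ s ∈ S, (μ {ω | X ω = s}).toReal = η s) →
      (∀ s ∈ S, (μ {ω | Y ω = s}).toReal = η s) →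
      |(∫ ω, X ω * Y ω ∂μ) - (∫ ω, X ω ∂μ) * (∫ ω, Y ω ∂μ)| ≤
        C * Real.sqrt
          (-(∑ s ∈ S, η s * Real.log (η s)) + -(∑ s ∈ S, η s * Real.log (η s))
            - -(∑ s ∈ S, ∑ t ∈ S,
                  (μ {ω | X ω = s ∧ Y ω = t}).toReal *
                    Real.log ((μ {ω | X ω = s ∧ Y ω = t}).toReal))) :=
  cov_le_sqrt_mutual_information_general S η
end

section
/- Let (Ω, 𝓕, P) be a probability space, 𝓐 a sub-σ-algebra, and f₁, f₂ ∈ L²(P) with f₂ measurable with respect to 𝓐. If both f₁ and f₂ are bounded by 1 in absolute value, then |Cov(f₁, f₂)| ≤ ‖E[f₁ | 𝓐] - E[f₁]‖₂. -/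
open MeasureTheory ProbabilityTheory

/-!
Since `f₂` is `𝓐`-measurable, pulling it out of the conditional expectation gives
`E[f₁ f₂] = E[E[f₁|𝓐] f₂]`, so `Cov(f₁, f₂) = E[f₂ (E[f₁|𝓐] - E[f₁])]`. As `|f₂| ≤ 1`, this is
at most `‖E[f₁|𝓐] - E[f₁]‖₁ ≤ ‖E[f₁|𝓐] - E[f₁]‖₂`.
-/

section

variable {Ω : Type*} {mΩ : MeasurableSpace Ω} {μ : Measure Ω}

lemma integral_abs_le_sqrt_integral_sq [IsProbabilityMeasure μ] {h : Ω → ℝ}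
    (hh : MemLp h 2 μ) : ∫ ω, |h ω| ∂μ ≤ Real.sqrt (∫ ω, h ω ^ 2 ∂μ) := by
  refine Real.le_sqrt_of_sq_le ?_
  have hvar := variance_nonneg |h| μ
  rw [variance_eq_sub hh.abs] at hvar
  simpa only [Pi.pow_apply, Pi.abs_apply, sq_abs, sub_nonneg] using hvar

lemma abs_integral_mul_le_sqrt_integral_sq [IsProbabilityMeasure μ] {u h : Ω → ℝ}
    (hu : ∀ᵐ ω ∂μ, |u ω| ≤ 1) (hh : MemLp h 2 μ) :
    |∫ ω, u ω * h ω ∂μ| ≤ Real.sqrt (∫ ω, h ω ^ 2 ∂μ) := by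
  have hle : |∫ ω, u ω * h ω ∂μ| ≤ ∫ ω, |h ω| ∂μ := by
    refine norm_integral_le_of_norm_le (hh.integrable one_le_two).abs
      (f := fun ω ↦ u ω * h ω) ?_
    filter_upwards [hu] with ω hω
    rw [Real.norm_eq_abs, abs_mul]
    exact mul_le_of_le_one_left (abs_nonneg _) hω
  exact hle.trans (integral_abs_le_sqrt_integral_sq hh)

lemma integral_mul_eq_integral_condExp_mul {m : MeasurableSpace Ω} (hm : m ≤ mΩ)
    [SigmaFinite (μ.trim hm)] {f g : Ω → ℝ} (hg : StronglyMeasurable[m] g)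
    (hfg : Integrable (f * g) μ) (hf : Integrable f μ) :
    ∫ ω, f ω * g ω ∂μ = ∫ ω, (μ[f|m]) ω * g ω ∂μ :=
  (integral_condExp hm).symm.trans
    (integral_congr_ae (condExp_mul_of_stronglyMeasurable_right hg hfg hf))

end

theorem cov_le_L2_condexp_dist_general {Ω : Type*} {mΩ : MeasurableSpace Ω}
    (μ : Measure Ω) [IsProbabilityMeasure μ]
    (𝓐 : MeasurableSpace Ω) (h𝓐 : 𝓐 ≤ mΩ)
    (f₁ f₂ : Ω → ℝ)
    (hf₁ : MemLp f₁ 2 μ) (hf₂ : MemLp f₂ 2 μ)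
    (hf₂meas : StronglyMeasurable[𝓐] f₂)
    (hb₂ : ∀ᵐ ω ∂μ, |f₂ ω| ≤ 1) :
    |(∫ ω, f₁ ω * f₂ ω ∂μ) - (∫ ω, f₁ ω ∂μ) * (∫ ω, f₂ ω ∂μ)| ≤
      Real.sqrt (∫ ω, ((μ[f₁|𝓐]) ω - ∫ ω', f₁ ω' ∂μ) ^ 2 ∂μ) := by
  set m := ∫ ω', f₁ ω' ∂μ
  have hf₁i : Integrable f₁ μ := hf₁.integrable one_le_two
  have hcondExp_mul : Integrable (fun ω ↦ f₂ ω * (μ[f₁|𝓐]) ω) μ :=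
    hf₂.integrable_mul (hf₁.condExp one_le_two)
  have hcov : (∫ ω, f₁ ω * f₂ ω ∂μ) - m * (∫ ω, f₂ ω ∂μ)
      = ∫ ω, f₂ ω * ((μ[f₁|𝓐]) ω - m) ∂μ := by
    rw [integral_mul_eq_integral_condExp_mul h𝓐 hf₂meas (hf₁.integrable_mul hf₂) hf₁i]
    simp only [mul_sub]
    rw [integral_sub hcondExp_mul ((hf₂.integrable one_le_two).mul_const m), integral_mul_const]
    simp only [mul_comm]
  rw [hcov]
  exact abs_integral_mul_le_sqrt_integral_sq hb₂ ((hf₁.condExp one_le_two).sub (memLp_const m))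

/-- for `f₁, f₂ ∈ L²` bounded by 1 with `f₂` measurable with respect
to a sub-σ-algebra `𝓐`, `|Cov(f₁,f₂)| ≤ ‖E[f₁|𝓐] - E[f₁]‖₂`. -/
theorem cov_le_L2_condexp_dist {Ω : Type*} {mΩ : MeasurableSpace Ω}
    (μ : Measure Ω) [IsProbabilityMeasure μ]
    (𝓐 : MeasurableSpace Ω) (h𝓐 : 𝓐 ≤ mΩ)
    (f₁ f₂ : Ω → ℝ)
    (hf₁ : MemLp f₁ 2 μ) (hf₂ : MemLp f₂ 2 μ)
    (hf₂meas : StronglyMeasurable[𝓐] f₂)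
    (hb₁ : ∀ᵐ ω ∂μ, |f₁ ω| ≤ 1) (hb₂ : ∀ᵐ ω ∂μ, |f₂ ω| ≤ 1) :
    |(∫ ω, f₁ ω * f₂ ω ∂μ) - (∫ ω, f₁ ω ∂μ) * (∫ ω, f₂ ω ∂μ)| ≤
      Real.sqrt (∫ ω, ((μ[f₁|𝓐]) ω - ∫ ω', f₁ ω' ∂μ) ^ 2 ∂μ) :=
  cov_le_L2_condexp_dist_general μ 𝓐 h𝓐 f₁ f₂ hf₁ hf₂ hf₂meas hb₂
end
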